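/- arXiv:2603.29411 — 3 statements merged into one kernel-verified Lean document; each statement's English description precedes it below -/
import Mathlib

section
/- Let u, v be positive words in {a,b}* with the same number of a's and the same number of b's, and let A, B be elements of a group satisfying B A B^{-1} = A^{-1}. Then for w = u^{-1}v one has w(A,B) = A^{(-1)^n (μ(v) - μ(u))}, where n is the common number of b's and μ is the signed a-count. In particular, if A and B additionally lie in SU(2) with A = diag(e^{iθ}, e^{-iθ}) and μ(u) ≠ μ(v), then choosing θ = π/(2|μ(v)-μ(u)|) gives tr(w(A,B)) = 0. -/
/-!
Conjugation by `B` inverts `A`, so `B` can be pushed to the right through any power of `A` at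
the cost of a sign: every positive word evaluates to `A ^ μ(x) * B ^ #_b(x)`. For words with the
same number `n` of `b`'s the quotient `u(A,B)⁻¹ v(A,B)` is then `A ^ (μ v - μ u)` conjugated by
`B ^ n`, i.e. `A ^ ((-1) ^ n (μ v - μ u))`. In `SU(2)`, the power `A ^ m` of
`A = diag(e^{iθ}, e^{-iθ})` has trace `2 cos (m θ)`, and `|m θ| = π / 2` for the chosen `θ`.
-/

def SU2 : Subgroup (Matrix.unitaryGroup (Fin 2) ℂ) where
  carrier := {A | (A : Matrix (Fin 2) (Fin 2) ℂ).det = 1}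
  one_mem' := by simp
  mul_mem' := by
    intro A B hA hB
    simp only [Set.mem_setOf_eq] at *
    rw [Matrix.UnitaryGroup.mul_val, Matrix.det_mul, hA, hB, one_mul]
  inv_mem' := by
    intro A hA
    simp only [Set.mem_setOf_eq] at *
    rw [Matrix.UnitaryGroup.inv_val]
    simp [Matrix.det_conjTranspose, star, hA]
    rfl

def SU2.mat (A : SU2) : Matrix (Fin 2) (Fin 2) ℂ := A.val.val

-- `true` is the letter `a`, `false` is the letter `b`.
abbrev PosWord := List Bool

def evalPos {G : Type*} [Group G] (A B : G) (x : PosWord) : G :=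
  (x.map (fun c => if c then A else B)).prod

def mu : PosWord → ℤ
  | [] => 0
  | (true :: xs) => 1 + mu xs
  | (false :: xs) => - mu xs

open Complex

section NormalForm

variable {G : Type*} [Group G] {A B : G}

theorem semiconjBy_zpow_of_conj_eq_inv (h : B * A * B⁻¹ = A⁻¹) (k : ℤ) :
    SemiconjBy B (A ^ k) (A ^ (-k)) := by
  have hB : SemiconjBy B A A⁻¹ := by rw [SemiconjBy, ← h, inv_mul_cancel_right]
  simpa only [inv_zpow'] using hB.zpow_right k

theorem pow_mul_zpow_of_conj_eq_inv (h : B * A * B⁻¹ = A⁻¹) (n : ℕ) (k : ℤ) :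
    B ^ n * A ^ k = A ^ ((-1) ^ n * k) * B ^ n := by
  induction n generalizing k with
  | zero => simp
  | succ n ih =>
    calc B ^ (n + 1) * A ^ k = B ^ n * (B * A ^ k) := by rw [pow_succ, mul_assoc]
      _ = A ^ ((-1) ^ n * -k) * B ^ n * B := by
        rw [(semiconjBy_zpow_of_conj_eq_inv h k).eq, ← mul_assoc, ih, mul_assoc]
      _ = A ^ ((-1) ^ (n + 1) * k) * B ^ (n + 1) := by
        rw [show (-1 : ℤ) ^ (n + 1) * k = (-1) ^ n * -k by ring, pow_succ, mul_assoc]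

theorem evalPos_eq_zpow_mu_mul_pow (h : B * A * B⁻¹ = A⁻¹) (x : PosWord) :
    evalPos A B x = A ^ mu x * B ^ x.count false := by
  induction x with
  | nil => simp [evalPos, mu]
  | cons c xs ih =>
    have hcons : evalPos A B (c :: xs) = (if c then A else B) * evalPos A B xs := by
      simp [evalPos]
    cases c with
    | true => simp [hcons, ih, mu, ← mul_assoc, zpow_one_add]
    | false =>
      rw [hcons, ih, if_neg Bool.false_ne_true, ← mul_assoc,
        (semiconjBy_zpow_of_conj_eq_inv h _).eq, mul_assoc, ← pow_succ', List.count_cons_self, mu]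

theorem inv_evalPos_mul_evalPos (h : B * A * B⁻¹ = A⁻¹) {u v : PosWord}
    (hb : u.count false = v.count false) :
    (evalPos A B u)⁻¹ * evalPos A B v = A ^ ((-1 : ℤ) ^ u.count false * (mu v - mu u)) := by
  rw [evalPos_eq_zpow_mu_mul_pow h, evalPos_eq_zpow_mu_mul_pow h, ← hb]
  generalize u.count false = n
  have hconj : B ^ n * A ^ ((-1 : ℤ) ^ n * (mu v - mu u)) = A ^ (mu v - mu u) * B ^ n := by
    rw [pow_mul_zpow_of_conj_eq_inv h, ← mul_assoc, ← mul_pow, neg_one_mul, neg_neg, one_pow,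
      one_mul]
  calc (A ^ mu u * B ^ n)⁻¹ * (A ^ mu v * B ^ n) = (B ^ n)⁻¹ * (A ^ (mu v - mu u) * B ^ n) := by
        rw [zpow_sub]; group
    _ = A ^ ((-1 : ℤ) ^ n * (mu v - mu u)) := by rw [← hconj, inv_mul_cancel_left]

end NormalForm

noncomputable def diagPhase (θ : ℝ) : Matrix (Fin 2) (Fin 2) ℂ :=
  Matrix.diagonal ![exp (θ * I), exp (-θ * I)]

theorem diagPhase_zero : diagPhase 0 = 1 := by
  rw [diagPhase, ← Matrix.diagonal_one, Matrix.diagonal_eq_diagonal_iff]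
  intro i
  fin_cases i <;> simp

theorem diagPhase_add (s t : ℝ) : diagPhase (s + t) = diagPhase s * diagPhase t := by
  rw [diagPhase, diagPhase, diagPhase, Matrix.diagonal_mul_diagonal,
    Matrix.diagonal_eq_diagonal_iff]
  intro i
  fin_cases i <;> simp [← exp_add] <;> ring_nf

theorem star_diagPhase (θ : ℝ) : star (diagPhase θ) = diagPhase (-θ) := by
  rw [diagPhase, diagPhase, Matrix.star_eq_conjTranspose, Matrix.diagonal_conjTranspose,
    Matrix.diagonal_eq_diagonal_iff]
  intro i
  fin_cases i <;> simp [← exp_conj]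

theorem trace_diagPhase (θ : ℝ) : (diagPhase θ).trace = 2 * Real.cos θ := by
  simp only [diagPhase, Matrix.trace_diagonal, Fin.sum_univ_two, Matrix.cons_val_zero,
    Matrix.cons_val_one, ofReal_cos, cos]
  ring_nf

theorem SU2.mat_mul (A B : SU2) : SU2.mat (A * B) = SU2.mat A * SU2.mat B := rfl

theorem SU2.mat_inv (A : SU2) : SU2.mat A⁻¹ = star (SU2.mat A) :=
  Matrix.UnitaryGroup.inv_val A.val

theorem SU2.mat_zpow_of_mat_eq_diagPhase {A : SU2} {θ : ℝ} (hA : SU2.mat A = diagPhase θ)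
    (m : ℤ) : SU2.mat (A ^ m) = diagPhase (m * θ) := by
  induction m using Int.induction_on with
  | zero => rw [zpow_zero, Int.cast_zero, zero_mul, diagPhase_zero]; rfl
  | succ k ih =>
    rw [zpow_add_one, SU2.mat_mul, ih, hA, ← diagPhase_add]; push_cast; ring_nf
  | pred k ih =>
    rw [zpow_sub_one, SU2.mat_mul, ih, SU2.mat_inv, hA, star_diagPhase, ← diagPhase_add]
    push_cast; ring_nf

theorem Real.cos_int_mul_pi_div_two_abs {d m : ℤ} (hd : d ≠ 0) (hm : |m| = |d|) :
    Real.cos (m * (Real.pi / (2 * |d|))) = 0 := by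
  have hd' : ((|d| : ℤ) : ℝ) ≠ 0 := Int.cast_ne_zero.mpr (abs_ne_zero.mpr hd)
  rw [← Real.cos_abs, abs_mul, ← Int.cast_abs, hm,
    abs_of_nonneg (by positivity : (0 : ℝ) ≤ Real.pi / (2 * |d|)),
    show ((|d| : ℤ) : ℝ) * (Real.pi / (2 * |d|)) = Real.pi / 2 by field_simp, Real.cos_pi_div_two]

theorem mixed_normalizer_slice_general (u v : PosWord)
    (hb : u.count false = v.count false) :
    (∀ (G : Type*) (_ : Group G) (A B : G), B * A * B⁻¹ = A⁻¹ →
      (evalPos A B u)⁻¹ * evalPos A B v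
        = A ^ ((-1 : ℤ) ^ (u.count false) * (mu v - mu u))) ∧
    (∀ (A B : SU2) (θ : ℝ), B * A * B⁻¹ = A⁻¹ →
      SU2.mat A = Matrix.diagonal ![Complex.exp (θ * Complex.I), Complex.exp (-θ * Complex.I)] →
      mu u ≠ mu v → θ = Real.pi / (2 * |(mu v - mu u : ℤ)|) →
      Matrix.trace (SU2.mat ((evalPos A B u)⁻¹ * evalPos A B v)) = 0) := by
  refine ⟨fun G _ A B h => inv_evalPos_mul_evalPos h hb, fun A B θ h hA hmu hθ => ?_⟩
  have hm : |(-1 : ℤ) ^ u.count false * (mu v - mu u)| = |mu v - mu u| := by simp [abs_mul]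
  rw [inv_evalPos_mul_evalPos h hb, SU2.mat_zpow_of_mat_eq_diagPhase hA, trace_diagPhase, hθ,
    Real.cos_int_mul_pi_div_two_abs (sub_ne_zero.mpr hmu.symm) hm]
  simp

/-- for positive words `u, v` with equal letter counts and `B A B⁻¹ = A⁻¹`,
the difference word evaluates as `w(A,B) = A^{(-1)^n (μ(v) - μ(u))}`; in particular in
`SU(2)` with `A = diag(e^{iθ}, e^{-iθ})`, `μ(u) ≠ μ(v)` and `θ = π/(2|μ(v)-μ(u)|)`,
the trace of `w(A,B)` vanishes. -/
theorem mixed_normalizer_slice (u v : PosWord)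
    (ha : u.count true = v.count true) (hb : u.count false = v.count false) :
    (∀ (G : Type*) (_ : Group G) (A B : G), B * A * B⁻¹ = A⁻¹ →
      (evalPos A B u)⁻¹ * evalPos A B v
        = A ^ ((-1 : ℤ) ^ (u.count false) * (mu v - mu u))) ∧
    (∀ (A B : SU2) (θ : ℝ), B * A * B⁻¹ = A⁻¹ →
      SU2.mat A = Matrix.diagonal ![Complex.exp (θ * Complex.I), Complex.exp (-θ * Complex.I)] →
      mu u ≠ mu v → θ = Real.pi / (2 * |(mu v - mu u : ℤ)|) →
      Matrix.trace (SU2.mat ((evalPos A B u)⁻¹ * evalPos A B v)) = 0) :=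
  mixed_normalizer_slice_general u v hb
end

section
/- For every g in SU(2), there exist X, Y in SU(2) such that the commutator X^{-1} Y^{-1} X Y equals g. That is, every element of SU(2) is a commutator. -/
open Complex ComplexConjugate
open scoped commutatorElement

section Commutators

variable {G : Type*} [Group G]

theorem mem_commutatorSet_of_isConj {g h : G} (hgh : IsConj g h) (hh : h ∈ commutatorSet G) :
    g ∈ commutatorSet G := by
  obtain ⟨c, rfl⟩ := isConj_iff.mp hgh.symm
  obtain ⟨x, y, rfl⟩ := hh
  exact ⟨_, _, (conjugate_commutatorElement x y c).symm⟩

theorem sq_mem_commutatorSet_of_conj_eq_inv {j d : G} (h : j * d * j⁻¹ = d⁻¹) :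
    d ^ 2 ∈ commutatorSet G :=
  ⟨d, j, calc ⁅d, j⁆ = d * (j * d * j⁻¹)⁻¹ := by group
    _ = d ^ 2 := by rw [h, inv_inv, sq]⟩

end Commutators

namespace SU2

/-- The matrix of the quaternion `a + b j`. -/
def quat (a b : ℂ) : Matrix (Fin 2) (Fin 2) ℂ := !![a, b; -conj b, conj a]

theorem quat_mul (a b c d : ℂ) :
    quat a b * quat c d = quat (a * c - b * conj d) (a * d + b * conj c) := by
  ext i j; fin_cases i <;> fin_cases j <;> simp [quat, Matrix.mul_apply] <;> ring

theorem quat_one_zero : quat 1 0 = 1 := by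
  simp [quat, Matrix.one_fin_two]

theorem star_quat (a b : ℂ) : star (quat a b) = quat (conj a) (-b) := by
  ext i j; fin_cases i <;> fin_cases j <;> simp [quat]

theorem det_quat (a b : ℂ) : (quat a b).det = normSq a + normSq b := by
  simp [quat, Matrix.det_fin_two_of, mul_conj]

theorem quat_mem_unitaryGroup {a b : ℂ} (h : normSq a + normSq b = 1) :
    quat a b ∈ Matrix.unitaryGroup (Fin 2) ℂ := by
  rw [Matrix.mem_unitaryGroup_iff, star_quat, quat_mul, ← quat_one_zero]
  simp [mul_conj, ← ofReal_add, h, mul_comm a b]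

def mk (a b : ℂ) (h : normSq a + normSq b = 1) : SU2 :=
  ⟨⟨quat a b, quat_mem_unitaryGroup h⟩, by
    show (quat a b).det = 1
    rw [det_quat, ← ofReal_add, h, ofReal_one]⟩

theorem mat_mk (a b : ℂ) (h : normSq a + normSq b = 1) : mat (mk a b h) = quat a b := rfl

theorem mat_one : mat 1 = 1 := rfl

theorem mat_mul_s5 (A B : SU2) : mat (A * B) = mat A * mat B := rfl

theorem mat_injective : Function.Injective mat :=
  fun _ _ h ↦ Subtype.ext (Subtype.ext h)

theorem star_mat_eq_adjugate (g : SU2) : star (mat g) = (mat g).adjugate := by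
  have hu : star (mat g) * mat g = 1 := Matrix.mem_unitaryGroup_iff'.mp g.val.2
  have hdet : (mat g).det = 1 := g.2
  rw [← Matrix.inv_eq_left_inv hu, Matrix.inv_def, hdet, Ring.inverse_one, one_smul]

theorem exists_eq_mk (g : SU2) : ∃ a b h, g = mk a b h := by
  have h := star_mat_eq_adjugate g
  rw [Matrix.adjugate_fin_two] at h
  have h10 : mat g 1 0 = -conj (mat g 0 1) := by
    simpa using congrArg (fun M ↦ conj (M 0 1)) h
  have h11 : mat g 1 1 = conj (mat g 0 0) := by
    simpa using (congrArg (· 0 0) h).symm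
  have hg : mat g = quat (mat g 0 0) (mat g 0 1) := by
    ext i j; fin_cases i <;> fin_cases j <;> simp [quat, h10, h11]
  have hdet : (mat g).det = 1 := g.2
  rw [hg, det_quat] at hdet
  exact ⟨_, _, by exact_mod_cast hdet, mat_injective hg⟩

def diag : Circle →* SU2 where
  toFun μ := mk μ 0 (by simp)
  map_one' := mat_injective (by simp [mat_one, mat_mk, quat_one_zero])
  map_mul' μ ν := mat_injective (by simp [mat_mul_s5, mat_mk, quat_mul])

theorem mat_diag (μ : Circle) : mat (diag μ) = quat μ 0 := rfl

def quatJ : SU2 := mk 0 1 (by simp)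

theorem quatJ_mul_diag (μ : Circle) : quatJ * diag μ = diag μ⁻¹ * quatJ :=
  mat_injective <| by
    rw [mat_mul_s5, mat_mul_s5, mat_diag, mat_diag, quatJ, mat_mk, quat_mul, quat_mul,
      Circle.coe_inv_eq_conj]
    simp

theorem quatJ_mul_diag_mul_inv (μ : Circle) : quatJ * diag μ * quatJ⁻¹ = (diag μ)⁻¹ := by
  rw [mul_inv_eq_iff_eq_mul, quatJ_mul_diag, map_inv]

theorem isConj_of_mul_quat_eq_quat_mul {g d : SU2} {x y : ℂ} (hxy : 0 < normSq x + normSq y)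
    (h : mat g * quat x y = quat x y * mat d) : IsConj d g := by
  set m := √(normSq x + normSq y)
  have hP : normSq (x / m) + normSq (y / m) = 1 := by
    rw [normSq_div, normSq_div, normSq_ofReal, ← add_div, Real.mul_self_sqrt hxy.le,
      div_self hxy.ne']
  have hPmat : mat (mk (x / m) (y / m) hP) = (m : ℂ)⁻¹ • quat x y := by
    ext i j; fin_cases i <;> fin_cases j <;> simp [mat_mk, quat, div_eq_inv_mul, conj_ofReal]
  refine ⟨toUnits (mk _ _ hP), mat_injective ?_⟩
  rw [val_toUnits_apply, mat_mul_s5, mat_mul_s5, hPmat, Matrix.smul_mul, Matrix.mul_smul, h]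

theorem exists_isConj_diag_exp (g : SU2) : ∃ θ : ℝ, IsConj (diag (Circle.exp θ)) g := by
  obtain ⟨a, b, hab, rfl⟩ := exists_eq_mk g
  have hre : |a.re| ≤ 1 := by
    rw [normSq_apply] at hab
    exact abs_le_one_iff_mul_self_le_one.2 (by nlinarith [normSq_nonneg b, mul_self_nonneg a.im])
  set θ := Real.arccos a.re
  set s := Real.sin θ
  have hcos : Real.cos θ = a.re := Real.cos_arccos (abs_le.1 hre).1 (abs_le.1 hre).2
  have hs : s ^ 2 = 1 - a.re ^ 2 := by rw [← hcos, ← Real.sin_sq_add_cos_sq θ]; ring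
  have hexp : (Circle.exp θ : ℂ) = a.re + s * I := by
    rw [Circle.coe_exp, exp_mul_I, ← ofReal_cos, ← ofReal_sin, hcos]
  refine ⟨θ, ?_⟩
  -- `(b, i (s - Im a))` is an eigenvector of `g` for `e^{iθ} = Re a + i s`; it vanishes only when
  -- `g` is already `diag (e^{iθ})`.
  by_cases hdiag : b = 0 ∧ a.im = s
  · obtain ⟨rfl, him⟩ := hdiag
    convert IsConj.refl _
    apply mat_injective
    simp [mat_diag, mat_mk, hexp, ← him, re_add_im]
  · apply isConj_of_mul_quat_eq_quat_mul (x := b) (y := (s - a.im : ℝ) * I)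
    · rw [normSq_mul, normSq_I, mul_one, normSq_ofReal]
      rcases not_and_or.mp hdiag with hb | him
      · exact add_pos_of_pos_of_nonneg (normSq_pos.2 hb) (mul_self_nonneg _)
      · exact add_pos_of_nonneg_of_pos (normSq_nonneg b)
          (mul_self_pos.2 (sub_ne_zero.2 (Ne.symm him)))
    · have hb : (normSq b : ℂ) = s ^ 2 - a.im ^ 2 := by
        rw [normSq_apply] at hab
        norm_cast
        linear_combination hab - hs
      rw [mat_mk, mat_diag, quat_mul, quat_mul, mul_conj, hb]
      simp only [map_mul, map_zero, conj_ofReal, conj_I, hexp, map_add]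
      push_cast
      congr 1
      · linear_combination -b * re_add_im a
      · linear_combination (-(s - a.im) * I) * re_add_im a + (s ^ 2 - a.im ^ 2) * I_sq

theorem mem_commutatorSet (g : SU2) : g ∈ commutatorSet SU2 := by
  obtain ⟨θ, hθ⟩ := exists_isConj_diag_exp g
  have hsq : diag (Circle.exp θ) = diag (Circle.exp (θ / 2)) ^ 2 := by
    rw [← map_pow, ← Circle.exp_natCast_mul]
    congr 2
    push_cast
    ring
  rw [hsq] at hθ
  exact mem_commutatorSet_of_isConj hθ.symm
    (sq_mem_commutatorSet_of_conj_eq_inv (quatJ_mul_diag_mul_inv _))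

end SU2

/-- every element of `SU(2)` is a commutator. -/
theorem su2_commutator_surjective (g : SU2) :
    ∃ X Y : SU2, X⁻¹ * Y⁻¹ * X * Y = g := by
  obtain ⟨X, Y, hXY⟩ := SU2.mem_commutatorSet g
  exact ⟨X⁻¹, Y⁻¹, by rw [← hXY, commutatorElement_def, inv_inv, inv_inv]⟩
end

section
/- Let u ≠ v be positive words in {a,b}* with the same letter counts, written u = a^{x_0} b a^{x_1} b ⋯ b a^{x_n} and v = a^{y_0} b ⋯ b a^{y_n}, and suppose the prefix sequences A_u(j) = x_0 + ⋯ + x_{j-1} and A_v(j) differ for exactly one index j_0. Then there exist positive words P, Q, an integer d ≥ 1, and a sign ε ∈ {±1} such that {u, v} = {P b a^d Q, P a^d b Q}, and consequently u^{-1} v = Q^{-1} [a^d, b]^{ε} Q in the free group F_2, where [x,y] = x^{-1}y^{-1}xy. -/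
/-- The natural embedding of the positive monoid `{a,b}*` into the free group `F₂`. -/
def toF2 (x : PosWord) : FreeGroup Bool := (x.map FreeGroup.of).prod

/-- The generators of the free group `F₂`. -/
def genA : FreeGroup Bool := FreeGroup.of true
def genB : FreeGroup Bool := FreeGroup.of false

/-- `prefixCountA x j` is `A_x(j)`: the number of `a`'s before the `j`-th `b` in `x`. -/
def prefixCountA : PosWord → ℕ → ℕ
  | [], _ => 0
  | (true :: xs), j => if j = 0 then 0 else 1 + prefixCountA xs j
  | (false :: xs), j => if j ≤ 1 then 0 else prefixCountA xs (j - 1)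

/-- The commutator `[a^d, b] = a^{-d} b⁻¹ a^d b` in `F₂`. -/
def commAdB (d : ℕ) : FreeGroup Bool := (genA ^ d)⁻¹ * genB⁻¹ * genA ^ d * genB

lemma pca_true (x : PosWord) (j : ℕ) (h : 1 ≤ j) :
    prefixCountA (true :: x) j = 1 + prefixCountA x j := by
  simp only [prefixCountA, if_neg (show ¬ j = 0 by omega)]

lemma pca_false (x : PosWord) (j : ℕ) (h : 2 ≤ j) :
    prefixCountA (false :: x) j = prefixCountA x (j - 1) := by
  simp only [prefixCountA, if_neg (show ¬ j ≤ 1 by omega)]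

lemma pca_false_one (x : PosWord) : prefixCountA (false :: x) 1 = 0 := by
  simp [prefixCountA]

lemma pca_rep (d : ℕ) (x : PosWord) (j : ℕ) (h : 1 ≤ j) :
    prefixCountA (List.replicate d true ++ x) j = d + prefixCountA x j := by
  induction d with
  | zero => simp
  | succ n ih => rw [List.replicate_succ, List.cons_append, pca_true _ _ h, ih]; omega

lemma toF2_append (x y : PosWord) : toF2 (x ++ y) = toF2 x * toF2 y := by
  simp [toF2]

lemma toF2_rep (d : ℕ) : toF2 (List.replicate d true) = genA ^ d := by
  induction d with
  | zero => simp [toF2]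
  | succ n ih =>
    rw [List.replicate_succ, pow_succ']
    simp only [toF2, List.map_cons, List.prod_cons] at ih ⊢
    rw [ih]; rfl

lemma toF2_b : toF2 [false] = genB := by simp [toF2, genB]

/-- a word is determined by its counts and prefix sequence -/
lemma pca_ext : ∀ s t : PosWord, s.count false = t.count false →
    s.count true = t.count true →
    (∀ j, 1 ≤ j → j ≤ s.count false → prefixCountA s j = prefixCountA t j) → s = t := by
  intro s
  induction s with
  | nil =>
    intro t hb ha _
    cases t with
    | nil => rfl
    | cons c t' => cases c <;> simp [List.count_cons] at hb ha
  | cons c s' ih =>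
    intro t hb ha hj
    cases t with
    | nil => cases c <;> simp [List.count_cons] at hb ha
    | cons c' t' =>
      cases c <;> cases c'
      · -- false false
        congr 1
        apply ih _ (by simpa [List.count_cons] using hb)
          (by simpa [List.count_cons] using ha)
        intro j h1 h2
        have h3 : j + 1 ≤ (false :: s').count false := by
          simp [List.count_cons] at h2 ⊢; omega
        have := hj (j+1) (by omega) h3
        rwa [pca_false _ _ (by omega), pca_false _ _ (by omega),
          Nat.add_sub_cancel] at this
      · -- false true : contradiction
        exfalso
        have hc : 1 ≤ (false :: s').count false := by simp [List.count_cons]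
        have := hj 1 le_rfl hc
        rw [pca_false_one, pca_true _ _ le_rfl] at this
        omega
      · -- true false : contradiction
        exfalso
        have hc : 1 ≤ (true :: s').count false := by
          rw [hb]; simp [List.count_cons]
        have := hj 1 le_rfl hc
        rw [pca_false_one, pca_true _ _ le_rfl] at this
        omega
      · -- true true
        congr 1
        apply ih _ (by simpa [List.count_cons] using hb)
          (by simpa [List.count_cons] using ha)
        intro j h1 h2
        have h3 : j ≤ (true :: s').count false := by simpa [List.count_cons] using h2
        have := hj j h1 h3
        rw [pca_true _ _ h1, pca_true _ _ h1] at this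
        omega

lemma exists_decomp : ∀ x : PosWord, 1 ≤ x.count false →
    ∃ w, x = List.replicate (prefixCountA x 1) true ++ false :: w := by
  intro x
  induction x with
  | nil => simp
  | cons c xs ih =>
    intro h
    cases c with
    | false => exact ⟨xs, by simp [pca_false_one]⟩
    | true =>
      obtain ⟨w, hw⟩ := ih (by simpa [List.count_cons] using h)
      refine ⟨w, ?_⟩
      rw [pca_true _ _ le_rfl, Nat.add_comm, List.replicate_succ, List.cons_append]
      conv_lhs => rw [hw]

lemma comm_identity (P Q : PosWord) (d : ℕ) :
    (toF2 (P ++ [false] ++ List.replicate d true ++ Q))⁻¹ *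
      toF2 (P ++ List.replicate d true ++ [false] ++ Q) =
    (toF2 Q)⁻¹ * commAdB d * toF2 Q := by
  simp only [toF2_append, toF2_rep, toF2_b, commAdB]
  group

lemma base (u₁ v₁ : PosWord)
    (ha : (false :: u₁).count true = (true :: v₁).count true)
    (hb : (false :: u₁).count false = (true :: v₁).count false)
    (j₀ : ℕ) (h1 : 1 ≤ j₀) (h2 : j₀ ≤ (false :: u₁).count false)
    (hne : prefixCountA (false :: u₁) j₀ ≠ prefixCountA (true :: v₁) j₀)
    (heq : ∀ j, 1 ≤ j → j ≤ (false :: u₁).count false → j ≠ j₀ →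
      prefixCountA (false :: u₁) j = prefixCountA (true :: v₁) j) :
    ∃ Q d, 1 ≤ d ∧ false :: u₁ = [false] ++ List.replicate d true ++ Q ∧
      true :: v₁ = List.replicate d true ++ [false] ++ Q := by
  -- j₀ = 1
  have hj1 : j₀ = 1 := by
    by_contra hj
    have := heq 1 le_rfl (le_trans h1 h2) (fun h => hj h.symm)
    rw [pca_false_one, pca_true _ _ le_rfl] at this
    omega
  subst hj1
  set d := prefixCountA (true :: v₁) 1 with hd
  have hd1 : 1 ≤ d := by
    rw [pca_false_one] at hne; omega
  -- decompose v
  have hcv : 1 ≤ (true :: v₁).count false := by rw [← hb]; exact h2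
  obtain ⟨w, hw⟩ := exists_decomp (true :: v₁) hcv
  rw [← hd] at hw
  refine ⟨w, d, hd1, ?_, by rw [hw]; simp⟩
  -- show u₁ = replicate d true ++ w
  have hu : u₁ = List.replicate d true ++ w := by
    have hbw : (true :: v₁).count false = w.count false + 1 := by
      rw [hw]; simp [List.count_cons, List.count_replicate]
    have haw : (true :: v₁).count true = d + w.count true := by
      rw [hw]; simp [List.count_cons, List.count_replicate, List.count_append]
    apply pca_ext
    · simp only [List.count_cons, List.count_append, List.count_replicate,
        if_true, if_false] at hb hbw ⊢
      simp at hb hbw ⊢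
      omega
    · simp only [List.count_cons, List.count_append, List.count_replicate,
        if_true, if_false] at ha haw ⊢
      simp at ha haw ⊢
      omega
    · intro j hj hjle
      have hjle2 : j + 1 ≤ (false :: u₁).count false := by
        simp [List.count_cons] at hjle ⊢; omega
      have := heq (j+1) (by omega) hjle2 (by omega)
      rw [pca_false _ _ (by omega), Nat.add_sub_cancel] at this
      rw [this, hw, pca_rep _ _ _ (by omega), pca_rep _ _ _ hj,
        pca_false _ _ (by omega), Nat.add_sub_cancel]
  rw [hu]; simp

lemma classify : ∀ u v : PosWord, u.count true = v.count true →
    u.count false = v.count false →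
    ∀ j₀, 1 ≤ j₀ → j₀ ≤ u.count false →
    prefixCountA u j₀ ≠ prefixCountA v j₀ →
    (∀ j, 1 ≤ j → j ≤ u.count false → j ≠ j₀ → prefixCountA u j = prefixCountA v j) →
    ∃ (P Q : PosWord) (d : ℕ), 1 ≤ d ∧
      ((u = P ++ [false] ++ List.replicate d true ++ Q ∧
        v = P ++ List.replicate d true ++ [false] ++ Q) ∨
       (u = P ++ List.replicate d true ++ [false] ++ Q ∧
        v = P ++ [false] ++ List.replicate d true ++ Q)) := by
  intro u
  induction u with
  | nil =>
    intro v ha hb j₀ h1 h2 hne heq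
    simp at h2
    omega
  | cons c u₁ ih =>
    intro v ha hb j₀ h1 h2 hne heq
    cases v with
    | nil =>
      exfalso
      simp at hb
      rw [hb] at h2
      omega
    | cons c' v₁ =>
      cases c <;> cases c'
      · -- false, false : strip common head
        have hj2 : 2 ≤ j₀ := by
          rcases Nat.lt_or_ge j₀ 2 with h | h
          · exfalso; apply hne
            have : j₀ = 1 := by omega
            rw [this, pca_false_one, pca_false_one]
          · exact h
        have hb' : u₁.count false = v₁.count false := by
          simp [List.count_cons] at hb; omega
        have h2' : j₀ - 1 ≤ u₁.count false := by
          simp [List.count_cons] at h2; omega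
        have hne' : prefixCountA u₁ (j₀ - 1) ≠ prefixCountA v₁ (j₀ - 1) := by
          rwa [pca_false _ _ hj2, pca_false _ _ hj2] at hne
        have heq' : ∀ j, 1 ≤ j → j ≤ u₁.count false → j ≠ j₀ - 1 →
            prefixCountA u₁ j = prefixCountA v₁ j := by
          intro j hj hjle hjn
          have hle2 : j + 1 ≤ (false :: u₁).count false := by
            simp [List.count_cons]; omega
          have := heq (j+1) (by omega) hle2 (by omega)
          rwa [pca_false _ _ (by omega), pca_false _ _ (by omega),
            Nat.add_sub_cancel] at this
        obtain ⟨P, Q, d, hd, hc⟩ := ih v₁ (by simpa [List.count_cons] using ha)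
          hb' (j₀ - 1) (by omega) h2' hne' heq'
        refine ⟨false :: P, Q, d, hd, ?_⟩
        rcases hc with ⟨e1, e2⟩ | ⟨e1, e2⟩
        · exact Or.inl ⟨by simp [e1], by simp [e2]⟩
        · exact Or.inr ⟨by simp [e1], by simp [e2]⟩
      · -- false, true : base case
        obtain ⟨Q, d, hd, hu, hv⟩ := base u₁ v₁ ha hb j₀ h1 h2 hne heq
        exact ⟨[], Q, d, hd, Or.inl ⟨by simpa using hu, by simpa using hv⟩⟩
      · -- true, false : base case, swapped
        have h2s : j₀ ≤ (false :: v₁).count false := by rw [← hb]; exact h2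
        have heqs : ∀ j, 1 ≤ j → j ≤ (false :: v₁).count false → j ≠ j₀ →
            prefixCountA (false :: v₁) j = prefixCountA (true :: u₁) j := by
          intro j hj hjle hjn
          exact (heq j hj (by rw [hb]; exact hjle) hjn).symm
        obtain ⟨Q, d, hd, hv, hu⟩ := base v₁ u₁ ha.symm hb.symm j₀ h1 h2s
          (Ne.symm hne) heqs
        exact ⟨[], Q, d, hd, Or.inr ⟨by simpa using hu, by simpa using hv⟩⟩
      · -- true, true : strip common head
        have hb' : u₁.count false = v₁.count false := by
          simpa [List.count_cons] using hb
        have h2' : j₀ ≤ u₁.count false := by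
          simpa [List.count_cons] using h2
        have hne' : prefixCountA u₁ j₀ ≠ prefixCountA v₁ j₀ := by
          rw [pca_true _ _ h1, pca_true _ _ h1] at hne
          intro h; exact hne (by omega)
        have heq' : ∀ j, 1 ≤ j → j ≤ u₁.count false → j ≠ j₀ →
            prefixCountA u₁ j = prefixCountA v₁ j := by
          intro j hj hjle hjn
          have := heq j hj (by simpa [List.count_cons] using hjle) hjn
          rw [pca_true _ _ hj, pca_true _ _ hj] at this
          omega
        obtain ⟨P, Q, d, hd, hc⟩ := ih v₁ (by simp [List.count_cons] at ha; omega)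
          hb' j₀ h1 h2' hne' heq'
        refine ⟨true :: P, Q, d, hd, ?_⟩
        rcases hc with ⟨e1, e2⟩ | ⟨e1, e2⟩
        · exact Or.inl ⟨by simp [e1], by simp [e2]⟩
        · exact Or.inr ⟨by simp [e1], by simp [e2]⟩


/-- if distinct positive words `u, v` with equal letter counts have prefix
sequences differing at exactly one row `j₀`, then `{u, v} = {P b a^d Q, P a^d b Q}` for
some positive words `P, Q` and some `d ≥ 1`, and `u⁻¹v = Q⁻¹ [a^d, b]^{±1} Q` in `F₂`. -/
theorem one_row_classification (u v : PosWord) (huv : u ≠ v)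
    (ha : u.count true = v.count true) (hb : u.count false = v.count false)
    (hrow : ∃ j₀, 1 ≤ j₀ ∧ j₀ ≤ u.count false ∧
      prefixCountA u j₀ ≠ prefixCountA v j₀ ∧
      ∀ j, 1 ≤ j → j ≤ u.count false → j ≠ j₀ → prefixCountA u j = prefixCountA v j) :
    ∃ (P Q : PosWord) (d : ℕ), 1 ≤ d ∧
      ((u = P ++ [false] ++ List.replicate d true ++ Q ∧
        v = P ++ List.replicate d true ++ [false] ++ Q ∧
        (toF2 u)⁻¹ * toF2 v = (toF2 Q)⁻¹ * commAdB d * toF2 Q) ∨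
       (u = P ++ List.replicate d true ++ [false] ++ Q ∧
        v = P ++ [false] ++ List.replicate d true ++ Q ∧
        (toF2 u)⁻¹ * toF2 v = (toF2 Q)⁻¹ * (commAdB d)⁻¹ * toF2 Q)) := by
  obtain ⟨j₀, h1, h2, hne, heq⟩ := hrow
  obtain ⟨P, Q, d, hd, hc⟩ := classify u v ha hb j₀ h1 h2 hne heq
  refine ⟨P, Q, d, hd, ?_⟩
  rcases hc with ⟨e1, e2⟩ | ⟨e1, e2⟩
  · refine Or.inl ⟨e1, e2, ?_⟩
    rw [e1, e2, comm_identity]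
  · refine Or.inr ⟨e1, e2, ?_⟩
    have h := comm_identity P Q d
    rw [← e1, ← e2] at h
    rw [show (toF2 u)⁻¹ * toF2 v = ((toF2 v)⁻¹ * toF2 u)⁻¹ by group, h]
    group
end
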